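/- Let p and q be real polynomials with no common real root, and suppose max(deg p, deg q) is odd. Then the rational function f(x) = p(x)/q(x), defined on ℝ minus the real roots of q, attains all but finitely many real values. -/

import Mathlib

open Polynomial Filter

/-!
For `y ∉ {0, lc p / lc q}` the polynomial `p - y q` has degree `max (deg p) (deg q)`, which is odd,
so it has a real root `x`. As `p` and `q` have no common real root, `q x ≠ 0` and `p x / q x = y`.
-/

namespace Polynomial

theorem natDegree_sub_C_mul_eq_max {K : Type*} [Field K] {p q : K[X]} {y : K} (hy₀ : y ≠ 0)
    (hy : y ≠ p.leadingCoeff / q.leadingCoeff) :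
    (p - C y * q).natDegree = max p.natDegree q.natDegree := by
  rcases lt_trichotomy p.natDegree q.natDegree with hlt | heq | hgt
  · rw [natDegree_sub_eq_right_of_natDegree_lt (by rwa [natDegree_C_mul hy₀]),
      natDegree_C_mul hy₀, max_eq_right hlt.le]
  · rcases eq_or_ne q 0 with rfl | hq
    · simp
    have hlc : p.leadingCoeff - y * q.leadingCoeff ≠ 0 := by
      rwa [sub_ne_zero, ne_comm, ne_eq, ← eq_div_iff (leadingCoeff_ne_zero.mpr hq)]
    rw [heq, max_self]
    refine natDegree_eq_of_le_of_coeff_ne_zero ?_ ?_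
    · exact (natDegree_sub_le _ _).trans (max_le heq.le (natDegree_C_mul_le _ _))
    · rwa [coeff_sub, coeff_C_mul, coeff_natDegree, ← heq, coeff_natDegree]
  · rw [natDegree_sub_eq_left_of_natDegree_lt ((natDegree_C_mul_le _ _).trans_lt hgt),
      max_eq_left hgt.le]

variable {𝕜 : Type*} [NormedField 𝕜] [LinearOrder 𝕜] [IsStrictOrderedRing 𝕜] [OrderTopology 𝕜]

theorem tendsto_atBot_atBot_of_odd_natDegree {P : 𝕜[X]} (hodd : Odd P.natDegree)
    (hlc : 0 < P.leadingCoeff) : Tendsto (fun x => P.eval x) atBot atBot := by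
  have hQ : (P.comp (-X)).leadingCoeff = -P.leadingCoeff := by
    rw [leadingCoeff_comp (by simp)]
    simp [hodd.neg_one_pow]
  have hQ_deg : 0 < (P.comp (-X)).degree := by
    rw [natDegree_pos_iff_degree_pos.symm, natDegree_comp]
    simpa using hodd.pos
  have := ((P.comp (-X)).tendsto_atBot_of_leadingCoeff_nonpos hQ_deg
    (by rw [hQ]; exact neg_nonpos.mpr hlc.le)).comp tendsto_neg_atBot_atTop
  simpa [Function.comp_def, eval_comp] using this

end Polynomial

theorem Real.exists_isRoot_of_odd_natDegree {P : ℝ[X]} (hodd : Odd P.natDegree) :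
    ∃ x, P.IsRoot x := by
  wlog hlc : 0 < P.leadingCoeff generalizing P
  · have hP : P ≠ 0 := fun h => by simp [h] at hodd
    obtain ⟨x, hx⟩ := this (P := -P) (by rwa [natDegree_neg]) (by
      rw [leadingCoeff_neg]
      exact neg_pos.mpr ((not_lt.mp hlc).lt_of_ne (leadingCoeff_ne_zero.mpr hP)))
    exact ⟨x, by simpa using hx⟩
  have hdeg : 0 < P.degree := natDegree_pos_iff_degree_pos.mp hodd.pos
  exact P.continuous.surjective (P.tendsto_atTop_of_leadingCoeff_nonneg hdeg hlc.le)
    (tendsto_atBot_atBot_of_odd_natDegree hodd hlc) 0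

instance Real.instIsRealClosed : IsRealClosed ℝ :=
  .of_linearOrderedField (fun hx => ⟨√_, (Real.mul_self_sqrt hx).symm⟩)
    Real.exists_isRoot_of_odd_natDegree

theorem IsRealClosed.exists_eval_div_eq {R : Type*} [Field R] [IsRealClosed R] {p q : R[X]}
    (hcr : ∀ x, ¬ (p.eval x = 0 ∧ q.eval x = 0)) (hodd : Odd (max p.natDegree q.natDegree))
    {y : R} (hy₀ : y ≠ 0) (hy : y ≠ p.leadingCoeff / q.leadingCoeff) :
    ∃ x, q.eval x ≠ 0 ∧ p.eval x / q.eval x = y := by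
  obtain ⟨x, hx⟩ := exists_isRoot_of_odd_natDegree (f := p - C y * q)
    (by rwa [natDegree_sub_C_mul_eq_max hy₀ hy])
  have hpq : p.eval x = y * q.eval x := by
    simpa [sub_eq_zero] using hx
  have hqx : q.eval x ≠ 0 := fun h => hcr x ⟨by rw [hpq, h, mul_zero], h⟩
  exact ⟨x, hqx, (div_eq_iff hqx).mpr hpq⟩

theorem almost_surjective_of_odd_maxdeg (p q : ℝ[X])
    (hcr : ∀ x : ℝ, ¬ (p.eval x = 0 ∧ q.eval x = 0))
    (hodd : Odd (max p.natDegree q.natDegree)) :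
    {y : ℝ | ¬ ∃ x : ℝ, q.eval x ≠ 0 ∧ p.eval x / q.eval x = y}.Finite := by
  refine (Set.toFinite {0, p.leadingCoeff / q.leadingCoeff}).subset fun y hy => ?_
  by_contra hy'
  simp only [Set.mem_insert_iff, Set.mem_singleton_iff, not_or] at hy'
  exact hy (IsRealClosed.exists_eval_div_eq hcr hodd hy'.1 hy'.2)
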